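/- arXiv:1309.2082 — 5 statements merged into one kernel-verified Lean document; each statement's English description precedes it below -/
import Mathlib

section
/- Nielsen's identity: H_{n+m}(x,s) = Σ_k binomial(n,k) binomial(m,k) k! (−s)^k H_{n-k}(x,s) H_{m-k}(x,s). -/
/-- Bivariate Hermite polynomial `H n x s = ∑ (-1)^k C(n,2k)(2k-1)!! s^k x^(n-2k)`. -/
noncomputable def hermiteH (n : ℕ) (x s : ℝ) : ℝ :=
  ∑ k ∈ Finset.range (n / 2 + 1),
    (-1 : ℝ) ^ k * (n.choose (2 * k) : ℝ) * (∏ i ∈ Finset.range k, (2 * i + 1 : ℝ))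
      * s ^ k * x ^ (n - 2 * k)

/-!
The polynomials satisfy the three-term recurrence `H (a+1) = x H a - a s H (a-1)`.
Write `S n m` for the right-hand side of Nielsen's identity, so that `S (n+m) 0 = H (n+m)`;
it suffices to show `S (n+1) m = S n (m+1)`. Splitting `C(n+1,k)` by Pascal's rule turns `S (n+1) m`
into a sum whose `k`-th term is `c k (H (p+1) H q - q s H p H (q-1))` with `p = n-k`, `q = m-k` and
`c k` symmetric in `n, m`; by the recurrence, `H (p+1) H q - q s H p H (q-1)` is symmetric in
`p, q`, so the same sum arises from `S (m+1) n = S n (m+1)`.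
-/

open Finset

namespace hermiteH

noncomputable def term (n k : ℕ) (x s : ℝ) : ℝ :=
  (-1 : ℝ) ^ k * (n.choose (2 * k) : ℝ) * (∏ i ∈ range k, (2 * i + 1 : ℝ))
    * s ^ k * x ^ (n - 2 * k)

variable (x s : ℝ)

theorem term_zero (n : ℕ) : term n 0 x s = x ^ n := by simp [term]

theorem eq_sum_range_term {n N : ℕ} (hN : n / 2 < N) :
    hermiteH n x s = ∑ k ∈ range N, term n k x s := by
  refine sum_subset (range_subset_range.2 (by omega)) fun k _ hk => ?_
  rw [mem_range, not_lt] at hk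
  simp [Nat.choose_eq_zero_of_lt (show n < 2 * k by omega)]

theorem term_add_two_succ (a k : ℕ) :
    term (a + 2) (k + 1) x s = x * term (a + 1) (k + 1) x s - (a + 1) * s * term a k x s := by
  have pascal : ((a + 2).choose (2 * (k + 1)) : ℝ)
      = (a + 1).choose (2 * k + 1) + (a + 1).choose (2 * (k + 1)) := by
    exact_mod_cast Nat.choose_succ_succ (a + 1) (2 * k + 1)
  have absorb : ((a + 1 : ℕ) : ℝ) * a.choose (2 * k) = (a + 1).choose (2 * k + 1) * (2 * k + 1) := by
    exact_mod_cast Nat.add_one_mul_choose_eq a (2 * k)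
  have shift : (((a + 1).choose (2 * (k + 1)) : ℝ)) * x ^ (a + 1 - 2 * (k + 1)) * x
      = (a + 1).choose (2 * (k + 1)) * x ^ (a - 2 * k) := by
    rcases le_or_gt (2 * (k + 1)) (a + 1) with h | h
    · rw [mul_assoc, ← pow_succ]; congr 3; omega
    · simp [Nat.choose_eq_zero_of_lt h]
  simp only [term, prod_range_succ, pascal,
    show a + 2 - 2 * (k + 1) = a - 2 * k by omega]
  push_cast at absorb
  linear_combination (-1 : ℝ) ^ (k + 1) * (∏ i ∈ range k, (2 * i + 1 : ℝ)) * s ^ (k + 1) *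
    (-(2 * k + 1) * shift - x ^ (a - 2 * k) * absorb)

theorem add_two (a : ℕ) :
    hermiteH (a + 2) x s = x * hermiteH (a + 1) x s - (a + 1) * s * hermiteH a x s := by
  rw [eq_sum_range_term x s (N := a + 3) (by omega), eq_sum_range_term x s (N := a + 3) (by omega),
    eq_sum_range_term x s (N := a + 2) (by omega), sum_range_succ' _ (a + 2),
    sum_range_succ' _ (a + 2)]
  simp only [term_add_two_succ, term_zero, sum_sub_distrib, ← mul_sum]
  ring

theorem succ (a : ℕ) :
    hermiteH (a + 1) x s = x * hermiteH a x s - a * s * hermiteH (a - 1) x s := by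
  cases a with
  | zero => simp [hermiteH]
  | succ b => simpa using add_two x s b

theorem succ_mul_sub_symm (p q : ℕ) :
    hermiteH (p + 1) x s * hermiteH q x s - q * s * hermiteH p x s * hermiteH (q - 1) x s
      = hermiteH (q + 1) x s * hermiteH p x s - p * s * hermiteH q x s * hermiteH (p - 1) x s := by
  rw [succ, succ]
  ring

end hermiteH

noncomputable def nielsenCoeff (n m k : ℕ) (s : ℝ) : ℝ :=
  (n.choose k : ℝ) * (m.choose k : ℝ) * (k.factorial : ℝ) * (-s) ^ k

noncomputable def nielsenSum (n m : ℕ) (x s : ℝ) : ℝ :=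
  ∑ k ∈ range (min n m + 1), nielsenCoeff n m k s * hermiteH (n - k) x s * hermiteH (m - k) x s

section Nielsen

variable (x s : ℝ)

theorem nielsenCoeff_comm (n m k : ℕ) : nielsenCoeff n m k s = nielsenCoeff m n k s := by
  rw [nielsenCoeff, nielsenCoeff, mul_comm (n.choose k : ℝ)]

theorem nielsenCoeff_eq_zero_of_lt {n m k : ℕ} (h : min n m < k) : nielsenCoeff n m k s = 0 := by
  rcases min_lt_iff.1 h with h | h <;> simp [nielsenCoeff, Nat.choose_eq_zero_of_lt h]

theorem nielsenCoeff_succ_succ (n m k : ℕ) :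
    nielsenCoeff (n + 1) m (k + 1) s
      = nielsenCoeff n m (k + 1) s + (m - k : ℕ) * -s * nielsenCoeff n m k s := by
  have absorb : (m.choose (k + 1) : ℝ) * (k + 1) = m.choose k * (m - k : ℕ) := by
    exact_mod_cast Nat.choose_succ_right_eq m k
  simp only [nielsenCoeff, Nat.choose_succ_succ, Nat.factorial_succ]
  push_cast
  linear_combination (n.choose k : ℝ) * k.factorial * (-s) ^ (k + 1) * absorb

theorem nielsenSum_eq_sum_range {n m N : ℕ} (hN : min n m < N) :
    nielsenSum n m x s
      = ∑ k ∈ range N, nielsenCoeff n m k s * hermiteH (n - k) x s * hermiteH (m - k) x s := by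
  refine sum_subset (range_subset_range.2 hN) fun k _ hk => ?_
  rw [mem_range, not_lt] at hk
  rw [nielsenCoeff_eq_zero_of_lt s hk, zero_mul, zero_mul]

theorem nielsenSum_comm (n m : ℕ) : nielsenSum n m x s = nielsenSum m n x s := by
  rw [nielsenSum, nielsenSum, min_comm]
  refine sum_congr rfl fun k _ => ?_
  rw [nielsenCoeff_comm]
  ring

theorem nielsenSum_zero_right (n : ℕ) : nielsenSum n 0 x s = hermiteH n x s := by
  simp [nielsenSum, nielsenCoeff, hermiteH]

theorem sum_range_nielsen_succ_left_pascal {n m N : ℕ} (hN : n < N) :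
    ∑ k ∈ range (N + 1),
        nielsenCoeff (n + 1) m k s * hermiteH (n + 1 - k) x s * hermiteH (m - k) x s
      = ∑ k ∈ range N, nielsenCoeff n m k s * (hermiteH (n + 1 - k) x s * hermiteH (m - k) x s
          - (m - k : ℕ) * s * hermiteH (n - k) x s * hermiteH (m - (k + 1)) x s) := by
  set D : ℕ → ℝ := fun k => nielsenCoeff n m k s * hermiteH (n + 1 - k) x s * hermiteH (m - k) x s
  have hD : ∑ k ∈ range N, D (k + 1) + D 0 = ∑ k ∈ range N, D k := by
    have hDN : D N = 0 := by
      simp only [D, nielsenCoeff_eq_zero_of_lt s (lt_of_le_of_lt (min_le_left n m) hN), zero_mul]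
    rw [← sum_range_succ', sum_range_succ, hDN, add_zero]
  calc _ = ∑ k ∈ range N, (D (k + 1) + (m - k : ℕ) * -s * nielsenCoeff n m k s
              * hermiteH (n - k) x s * hermiteH (m - (k + 1)) x s) + D 0 := by
        simp only [sum_range_succ' _ N, nielsenCoeff_succ_succ, Nat.add_sub_add_right, D]
        congr 1
        · exact sum_congr rfl fun k _ => by ring
        · simp [nielsenCoeff]
    _ = _ := by
        rw [sum_add_distrib, add_right_comm, hD, ← sum_add_distrib]
        exact sum_congr rfl fun k _ => by ring

theorem nielsenCoeff_mul_symm (n m k : ℕ) :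
    nielsenCoeff n m k s * (hermiteH (n + 1 - k) x s * hermiteH (m - k) x s
        - (m - k : ℕ) * s * hermiteH (n - k) x s * hermiteH (m - (k + 1)) x s)
      = nielsenCoeff m n k s * (hermiteH (m + 1 - k) x s * hermiteH (n - k) x s
        - (n - k : ℕ) * s * hermiteH (m - k) x s * hermiteH (n - (k + 1)) x s) := by
  rw [nielsenCoeff_comm s n m]
  rcases le_or_gt k (min n m) with hk | hk
  · have := hermiteH.succ_mul_sub_symm x s (n - k) (m - k)
    rw [le_min_iff] at hk
    rw [show n + 1 - k = n - k + 1 by omega, show m + 1 - k = m - k + 1 by omega,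
      show n - (k + 1) = n - k - 1 by omega, show m - (k + 1) = m - k - 1 by omega, this]
  · rw [nielsenCoeff_eq_zero_of_lt s (min_comm n m ▸ hk), zero_mul, zero_mul]

theorem nielsenSum_succ_left (n m : ℕ) : nielsenSum (n + 1) m x s = nielsenSum n (m + 1) x s := by
  calc nielsenSum (n + 1) m x s
      = ∑ k ∈ range (n + m + 1 + 1),
          nielsenCoeff (n + 1) m k s * hermiteH (n + 1 - k) x s * hermiteH (m - k) x s :=
        nielsenSum_eq_sum_range x s (by omega)
    _ = ∑ k ∈ range (n + m + 1 + 1),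
          nielsenCoeff (m + 1) n k s * hermiteH (m + 1 - k) x s * hermiteH (n - k) x s := by
        rw [sum_range_nielsen_succ_left_pascal x s (by omega),
          sum_range_nielsen_succ_left_pascal x s (by omega)]
        exact sum_congr rfl fun k _ => nielsenCoeff_mul_symm x s n m k
    _ = nielsenSum n (m + 1) x s := by
        rw [← nielsenSum_eq_sum_range x s (by omega), nielsenSum_comm]

theorem hermiteH_add_eq_nielsenSum (n m : ℕ) : hermiteH (n + m) x s = nielsenSum n m x s := by
  induction m generalizing n with
  | zero => rw [add_zero, nielsenSum_zero_right]
  | succ m ih => rw [← add_assoc, add_right_comm, ih, nielsenSum_succ_left]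

end Nielsen

theorem hermite_nielsen (n m : ℕ) (x s : ℝ) :
    hermiteH (n + m) x s =
      ∑ k ∈ Finset.range (min n m + 1),
        (n.choose k : ℝ) * (m.choose k : ℝ) * (k.factorial : ℝ) * (-s) ^ k *
          hermiteH (n - k) x s * hermiteH (m - k) x s :=
  hermiteH_add_eq_nielsenSum x s n m
end

section
/- The Rodrigues formula for Hermite polynomials: H_n(x,s) = e^{x²/(2s)} · (−s d/dx)^n e^{-x²/(2s)}, i.e., applying n times the operator f ↦ −s·f' to the function x ↦ e^{-x²/(2s)} and multiplying by e^{x²/(2s)} yields H_n(x,s). -/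
open Polynomial Finset
open scoped Nat

theorem Nat.doubleFactorial_two_mul_sub_one (k : ℕ) :
    (2 * k - 1)‼ = ∏ i ∈ range k, (2 * i + 1) := by
  cases k with
  | zero => rfl
  | succ k =>
    rw [show 2 * (k + 1) - 1 = 2 * k + 1 by omega, Nat.doubleFactorial_eq_prod_odd,
      prod_range_succ']
    simp

theorem hermiteH_one_eq_aeval_hermite (n : ℕ) (x : ℝ) :
    hermiteH n x 1 = aeval x (hermite n) := by
  rw [aeval_eq_sum_range, natDegree_hermite]
  refine sum_of_injOn (fun k => n - 2 * k) ?_ ?_ ?_ ?_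
  · intro a ha b hb hab
    simp only [coe_range, Set.mem_Iio] at ha hb hab
    omega
  · intro k hk
    simp only [coe_range, Set.mem_Iio] at hk ⊢
    omega
  · intro i hi hi'
    simp only [mem_range, coe_range, Set.mem_Iio, Set.mem_image, not_exists, not_and] at hi hi'
    have hodd : Odd (n + i) := by
      rw [Nat.odd_iff]
      by_contra h
      exact hi' ((n - i) / 2) (by omega) (by omega)
    rw [coeff_hermite_of_odd_add hodd, zero_smul]
  · intro k hk
    have h2k : 2 * k ≤ n := by rw [mem_range] at hk; omega
    rw [coeff_hermite_of_even_add (by rw [Nat.even_iff]; omega),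
      show n - (n - 2 * k) = 2 * k by omega, Nat.mul_div_cancel_left _ two_pos,
      Nat.choose_symm h2k, Nat.doubleFactorial_two_mul_sub_one, zsmul_eq_mul]
    push_cast
    ring

theorem hermiteH_mul_sq (n : ℕ) (t x : ℝ) :
    hermiteH n (t * x) (t ^ 2) = t ^ n * hermiteH n x 1 := by
  simp only [hermiteH, mul_sum, one_pow, mul_one]
  refine sum_congr rfl fun k hk => ?_
  have h2k : 2 * k ≤ n := by rw [mem_range] at hk; omega
  have ht : t ^ n = (t ^ 2) ^ k * t ^ (n - 2 * k) := by
    rw [← pow_mul, ← pow_add]; congr 1; omega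
  rw [ht, mul_pow]
  ring

theorem hermiteH_sq_eq_pow_mul_aeval_hermite {t : ℝ} (ht : t ≠ 0) (n : ℕ) (x : ℝ) :
    hermiteH n x (t ^ 2) = t ^ n * aeval (t⁻¹ * x) (hermite n) := by
  rw [← hermiteH_one_eq_aeval_hermite, ← hermiteH_mul_sq, mul_inv_cancel_left₀ ht]

theorem iterate_smul_deriv_comp_mul_left {𝕜 F : Type*} [NontriviallyNormedField 𝕜]
    [NormedAddCommGroup F] [NormedSpace 𝕜 F] (a c : 𝕜) (g : 𝕜 → F) (n : ℕ) (x : 𝕜) :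
    (fun f : 𝕜 → F => fun y => a • deriv f y)^[n] (fun y => g (c * y)) x =
      (a * c) ^ n • deriv^[n] g (c * x) := by
  induction n generalizing x with
  | zero => simp
  | succ n ih =>
    rw [Function.iterate_succ_apply', funext ih, deriv_fun_const_smul_field, deriv_comp_mul_left,
      Function.iterate_succ_apply', smul_smul, smul_smul, pow_succ]
    ring_nf

theorem iterate_neg_sq_mul_deriv_gaussian {t : ℝ} (ht : t ≠ 0) (n : ℕ) (x : ℝ) :
    (fun f : ℝ → ℝ => fun y => -t ^ 2 * deriv f y)^[n]
        (fun y => Real.exp (-(y ^ 2) / (2 * t ^ 2))) x =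
      hermiteH n x (t ^ 2) * Real.exp (-(x ^ 2) / (2 * t ^ 2)) := by
  have hgauss (y : ℝ) : Real.exp (-(y ^ 2) / (2 * t ^ 2)) = Real.exp (-((t⁻¹ * y) ^ 2 / 2)) := by
    field_simp
  have hscale : -t ^ 2 * t⁻¹ = -t := by field_simp
  have hsign : (-t) ^ n * (-1) ^ n = t ^ n := by rw [← mul_pow, neg_mul_neg, mul_one]
  simp_rw [hgauss, ← smul_eq_mul (a := -t ^ 2)]
  rw [iterate_smul_deriv_comp_mul_left (g := fun z => Real.exp (-(z ^ 2 / 2))),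
    deriv_gaussian_eq_hermite_mul_gaussian, hscale, smul_eq_mul,
    hermiteH_sq_eq_pow_mul_aeval_hermite ht]
  linear_combination aeval (t⁻¹ * x) (hermite n) * Real.exp (-((t⁻¹ * x) ^ 2 / 2)) * hsign

theorem hermite_rodrigues (s : ℝ) (hs : 0 < s) (n : ℕ) (x : ℝ) :
    hermiteH n x s =
      Real.exp (x ^ 2 / (2 * s)) *
        ((fun f : ℝ → ℝ => fun y => -s * deriv f y)^[n]
          (fun y => Real.exp (-(y ^ 2) / (2 * s)))) x := by
  obtain ⟨t, ht, rfl⟩ : ∃ t : ℝ, t ≠ 0 ∧ s = t ^ 2 :=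
    ⟨√s, (Real.sqrt_pos.2 hs).ne', (Real.sq_sqrt hs.le).symm⟩
  rw [iterate_neg_sq_mul_deriv_gaussian ht, mul_left_comm, ← Real.exp_add, ← add_div,
    add_neg_cancel, zero_div, Real.exp_zero, mul_one]
end

section
/- The q-derivative of the q-Hermite polynomial satisfies D_q H_n(x,s,q) = [n]_q H_{n−1}(x,s,q), where D_q f(x) = (f(x) − f(qx))/((1−q)x). -/
noncomputable section

/-- The q-integer `[n]_q = (1 - q^n)/(1 - q)`. -/
def qnat (q : ℝ) (n : ℕ) : ℝ := (1 - q ^ n) / (1 - q)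

/-- The q-factorial `[n]_q!`. -/
def qfac (q : ℝ) (n : ℕ) : ℝ := ∏ j ∈ Finset.range n, qnat q (j + 1)

/-- The Gaussian binomial coefficient. -/
def qbinom (q : ℝ) (n k : ℕ) : ℝ := qfac q n / (qfac q k * qfac q (n - k))

/-- The odd q-double factorial `[2k-1]_q!! = [1]_q [3]_q ⋯ [2k-1]_q`. -/
def qdf (q : ℝ) (k : ℕ) : ℝ := ∏ i ∈ Finset.range k, qnat q (2 * i + 1)

/-- The bivariate q-Hermite polynomial
`H n (x,s,q) = ∑_{2k ≤ n} (-s)^k q^(k²) qbinom(n,2k) [2k-1]_q!! x^(n-2k)`. -/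
def qHermite (q s : ℝ) (n : ℕ) (x : ℝ) : ℝ :=
  ∑ k ∈ Finset.range (n / 2 + 1),
    (-s) ^ k * q ^ (k ^ 2) * qbinom q n (2 * k) * qdf q k * x ^ (n - 2 * k)

end


/-!
`D_q` acts on each monomial by `D_q x^m = [m]_q x^(m-1)`, so the claim reduces, coefficient by
coefficient, to the identity `qbinom(n+1, k) [n+1-k]_q = [n+1]_q qbinom(n, k)` of q-factorials;
the constant top term of `H_n` for even `n` is annihilated.
-/

open Finset

noncomputable def qDeriv (q : ℝ) (f : ℝ → ℝ) (x : ℝ) : ℝ := (f x - f (q * x)) / ((1 - q) * x)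

section

variable {q : ℝ}

lemma qnat_ne_zero (hq : 0 < q) (hq1 : q ≠ 1) {m : ℕ} (hm : m ≠ 0) : qnat q m ≠ 0 := by
  have hqm : q ^ m ≠ 1 := by rwa [Ne, pow_eq_one_iff_of_nonneg hq.le hm]
  exact div_ne_zero (sub_ne_zero.2 hqm.symm) (sub_ne_zero.2 hq1.symm)

lemma qfac_succ (n : ℕ) : qfac q (n + 1) = qfac q n * qnat q (n + 1) :=
  prod_range_succ _ _

lemma qfac_ne_zero (hq : 0 < q) (hq1 : q ≠ 1) (n : ℕ) : qfac q n ≠ 0 :=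
  prod_ne_zero_iff.2 fun j _ => qnat_ne_zero hq hq1 j.succ_ne_zero

lemma qbinom_succ_mul_qnat (hq : 0 < q) (hq1 : q ≠ 1) {n k : ℕ} (hk : k ≤ n) :
    qbinom q (n + 1) k * qnat q (n + 1 - k) = qnat q (n + 1) * qbinom q n k := by
  obtain ⟨j, rfl⟩ := Nat.exists_eq_add_of_le hk
  have hj : k + j + 1 - k = j + 1 := by omega
  have := qfac_ne_zero hq hq1 k
  have := qfac_ne_zero hq hq1 j
  have := qnat_ne_zero hq hq1 j.succ_ne_zero
  simp only [qbinom, hj, Nat.add_sub_cancel_left, qfac_succ]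
  field_simp

lemma qDeriv_sum_mul_pow {ι : Type*} (hq1 : q ≠ 1) {x : ℝ} (hx : x ≠ 0) (s : Finset ι)
    (c : ι → ℝ) (e : ι → ℕ) :
    qDeriv q (fun y => ∑ i ∈ s, c i * y ^ e i) x = ∑ i ∈ s, c i * qnat q (e i) * x ^ (e i - 1) := by
  have hq1' : 1 - q ≠ 0 := sub_ne_zero.2 hq1.symm
  rw [qDeriv, ← sum_sub_distrib, sum_div]
  refine sum_congr rfl fun i _ => ?_
  rcases Nat.eq_zero_or_pos (e i) with he | he
  · simp [he, qnat]
  obtain ⟨m, hm⟩ := Nat.exists_eq_add_of_lt he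
  rw [hm, qnat, Nat.add_sub_cancel]
  field_simp
  ring

end

theorem qHermite_qDeriv (q : ℝ) (hq : 0 < q) (hq1 : q < 1) (s : ℝ) (n : ℕ)
    (x : ℝ) (hx : x ≠ 0) :
    (qHermite q s n x - qHermite q s n (q * x)) / ((1 - q) * x)
      = qnat q n * qHermite q s (n - 1) x := by
  change qDeriv q (qHermite q s n) x = _
  unfold qHermite
  rw [qDeriv_sum_mul_pow hq1.ne hx]
  rcases n with _ | n
  · simp [qnat]
  have hsub : range (n / 2 + 1) ⊆ range ((n + 1) / 2 + 1) := range_subset_range.2 (by omega)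
  rw [Nat.add_sub_cancel, mul_sum, ← sum_subset hsub]
  · refine sum_congr rfl fun k hk => ?_
    have h2k : 2 * k ≤ n := by rw [mem_range] at hk; omega
    rw [show n + 1 - 2 * k - 1 = n - 2 * k by omega]
    linear_combination ((-s) ^ k * q ^ k ^ 2 * qdf q k * x ^ (n - 2 * k)) *
      qbinom_succ_mul_qnat hq hq1.ne h2k
  · intro k hk hk'
    rw [mem_range] at hk hk'
    simp [show n + 1 - 2 * k = 0 by omega, qnat]
end

section
/- Moment formula for discrete q-Hermite I: with Λ(f) = (∫_{−1}^1 f(x)(q²x²;q²)_∞ d_q x) / (∫_{−1}^1 (q²x²;q²)_∞ d_q x), one has Λ(x^{2m}) = (q;q²)_m = Π_{i=0}^{m−1}(1 − q^{2i+1}) and Λ(x^{2m+1}) = 0. -/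
/-- The infinite q-Pochhammer symbol `(a; p)_∞ = ∏_{j≥0} (1 - a p^j)`. -/
noncomputable def qPochInf (a p : ℝ) : ℝ := ∏' j : ℕ, (1 - a * p ^ j)

/-- The weight `(q²x²; q²)_∞`. -/
noncomputable def qWeight (q x : ℝ) : ℝ := qPochInf (q ^ 2 * x ^ 2) (q ^ 2)

/-- The normalized linear functional given by the Jackson q-integral
`Λ(f) = (∫_{-1}^1 f(x) (q²x²;q²)_∞ d_q x) / (∫_{-1}^1 (q²x²;q²)_∞ d_q x)`. -/
noncomputable def qHermiteIFunctional (q : ℝ) (f : ℝ → ℝ) : ℝ :=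
  (∑' j : ℕ, (f (q ^ j) + f (-(q ^ j))) * qWeight q (q ^ j) * (q ^ j - q ^ (j + 1))) /
  (∑' j : ℕ, (qWeight q (q ^ j) + qWeight q (-(q ^ j))) * (q ^ j - q ^ (j + 1)))

/-!
Write `w j = (q^{2j+2}; q²)_∞` for the weight at the node `q^j`, and
`S k = ∑ⱼ q^{(2k+1)j} w j`, so that the Jackson integral of `x^{2k}` against the weight is
`2(1-q) S k`, while odd powers integrate to zero by symmetry. Peeling one factor off the product
gives `w j = (1 - q^{2j+2}) w (j+1)`, and shifting the summation index by one with this relation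
yields `S k - S (k+1) = q^{2k+1} S k`. Hence `S m = (q; q²)_m S 0`, and `Λ(x^{2m}) = S m / S 0`.
-/

namespace Real

variable {ι : Type*} {a : ι → ℝ}

lemma summable_log_one_sub (ha : Summable a) : Summable fun i ↦ log (1 - a i) := by
  simpa only [sub_eq_add_neg] using summable_log_one_add_of_summable ha.neg

lemma tprod_one_sub_pos (ha : Summable a) (ha1 : ∀ i, a i < 1) : 0 < ∏' i, (1 - a i) := by
  rw [← rexp_tsum_eq_tprod (fun i ↦ sub_pos.2 (ha1 i)) (summable_log_one_sub ha)]
  exact exp_pos _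

lemma tprod_one_sub_le_one (ha : Summable a) (ha0 : ∀ i, 0 ≤ a i) (ha1 : ∀ i, a i < 1) :
    ∏' i, (1 - a i) ≤ 1 := by
  rw [← rexp_tsum_eq_tprod (fun i ↦ sub_pos.2 (ha1 i)) (summable_log_one_sub ha),
    exp_le_one_iff]
  exact tsum_nonpos fun i ↦ log_nonpos (by linarith [ha1 i]) (by linarith [ha0 i])

end Real

section QPochhammer

variable {c p : ℝ}

lemma summable_mul_geometric (c : ℝ) (hp : |p| < 1) : Summable fun j : ℕ ↦ c * p ^ j :=
  (summable_geometric_of_abs_lt_one hp).mul_left c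

lemma qPochInf_eq_one_sub_mul (c : ℝ) (hp : |p| < 1) :
    qPochInf c p = (1 - c) * qPochInf (c * p) p := by
  have hshift (j : ℕ) : 1 - c * p ^ (j + 1) = 1 + -(c * p * p ^ j) := by ring
  have hmul : Multipliable fun j : ℕ ↦ 1 - c * p ^ (j + 1) := by
    simp only [hshift]
    exact Real.multipliable_one_add_of_summable (summable_mul_geometric (c * p) hp).neg
  rw [qPochInf, tprod_eq_zero_mul' (f := fun j : ℕ ↦ 1 - c * p ^ j) hmul, pow_zero, mul_one,
    qPochInf]
  simp only [hshift, ← sub_eq_add_neg]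

lemma mul_pow_lt_one (hc0 : 0 ≤ c) (hc1 : c < 1) (hp0 : 0 ≤ p) (hp1 : p < 1) (j : ℕ) :
    c * p ^ j < 1 :=
  lt_of_le_of_lt (mul_le_of_le_one_right hc0 (pow_le_one₀ hp0 hp1.le)) hc1

lemma qPochInf_pos (hc0 : 0 ≤ c) (hc1 : c < 1) (hp0 : 0 ≤ p) (hp1 : p < 1) :
    0 < qPochInf c p :=
  Real.tprod_one_sub_pos (summable_mul_geometric c (abs_lt.2 ⟨by linarith, hp1⟩))
    (mul_pow_lt_one hc0 hc1 hp0 hp1)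

lemma qPochInf_le_one (hc0 : 0 ≤ c) (hc1 : c < 1) (hp0 : 0 ≤ p) (hp1 : p < 1) :
    qPochInf c p ≤ 1 :=
  Real.tprod_one_sub_le_one (summable_mul_geometric c (abs_lt.2 ⟨by linarith, hp1⟩))
    (fun j ↦ mul_nonneg hc0 (pow_nonneg hp0 j)) (mul_pow_lt_one hc0 hc1 hp0 hp1)

end QPochhammer

section Weight

variable {q x : ℝ}

lemma qWeight_neg (q x : ℝ) : qWeight q (-x) = qWeight q x := by
  rw [qWeight, qWeight, neg_sq]

lemma qWeight_eq_one_sub_mul (hq : |q| < 1) (x : ℝ) :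
    qWeight q x = (1 - q ^ 2 * x ^ 2) * qWeight q (q * x) := by
  have hq2 : |q ^ 2| < 1 := by rw [abs_pow]; exact pow_lt_one₀ (abs_nonneg q) hq two_ne_zero
  rw [qWeight, qPochInf_eq_one_sub_mul _ hq2, qWeight]
  ring_nf

lemma sq_mul_sq_lt_one (hq : |q| < 1) (hx : |x| ≤ 1) : q ^ 2 * x ^ 2 < 1 := by
  rw [← mul_pow, ← sq_abs, abs_mul]
  exact pow_lt_one₀ (by positivity)
    (lt_of_le_of_lt (mul_le_of_le_one_right (abs_nonneg q) hx) hq) two_ne_zero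

lemma qWeight_pos (hq : |q| < 1) (hx : |x| ≤ 1) : 0 < qWeight q x :=
  qPochInf_pos (by positivity) (sq_mul_sq_lt_one hq hx) (sq_nonneg q)
    ((sq_lt_one_iff_abs_lt_one q).2 hq)

lemma qWeight_le_one (hq : |q| < 1) (hx : |x| ≤ 1) : qWeight q x ≤ 1 :=
  qPochInf_le_one (by positivity) (sq_mul_sq_lt_one hq hx) (sq_nonneg q)
    ((sq_lt_one_iff_abs_lt_one q).2 hq)

end Weight

/-- `(1 - q)⁻¹ ∫₀¹ x^{2k} (q²x²; q²)_∞ d_q x`. -/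
noncomputable def qWeightMomentSum (q : ℝ) (k : ℕ) : ℝ :=
  ∑' j : ℕ, q ^ ((2 * k + 1) * j) * qWeight q (q ^ j)

section MomentSum

variable {q : ℝ} (hq : 0 < q) (hq1 : q < 1)
include hq hq1

lemma abs_pow_le_one (j : ℕ) : |q ^ j| ≤ 1 := by
  rw [abs_of_pos (pow_pos hq j)]
  exact pow_le_one₀ hq.le hq1.le

lemma summable_pow_mul_qWeight (k : ℕ) :
    Summable fun j : ℕ ↦ q ^ ((2 * k + 1) * j) * qWeight q (q ^ j) := by
  have hq' : |q| < 1 := (abs_of_pos hq).trans_lt hq1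
  refine Summable.of_nonneg_of_le
    (fun j ↦ mul_nonneg (pow_nonneg hq.le _) (qWeight_pos hq' (abs_pow_le_one hq hq1 j)).le)
    (fun j ↦ ?_)
    (summable_geometric_of_lt_one (pow_nonneg hq.le (2 * k + 1))
      (pow_lt_one₀ hq.le hq1 (by omega)))
  rw [← pow_mul]
  exact mul_le_of_le_one_right (pow_nonneg hq.le _) (qWeight_le_one hq' (abs_pow_le_one hq hq1 j))

lemma qWeightMomentSum_succ (k : ℕ) :
    qWeightMomentSum q (k + 1) = (1 - q ^ (2 * k + 1)) * qWeightMomentSum q k := by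
  have hq' : |q| < 1 := (abs_of_pos hq).trans_lt hq1
  have hrec (j : ℕ) : qWeight q (q ^ j) = (1 - q ^ (2 * j + 2)) * qWeight q (q ^ (j + 1)) := by
    rw [qWeight_eq_one_sub_mul hq' (q ^ j), ← pow_succ']
    ring
  have hS := summable_pow_mul_qWeight hq hq1
  -- the `j = 0` term of `S k - S (k+1)` vanishes, and the rest is `q^{2k+1} S k` by `hrec`
  have key : qWeightMomentSum q k - qWeightMomentSum q (k + 1) =
      q ^ (2 * k + 1) * qWeightMomentSum q k := by
    rw [qWeightMomentSum, qWeightMomentSum, ← (hS k).tsum_sub (hS (k + 1)),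
      tsum_eq_zero_add' ((summable_nat_add_iff 1).2 ((hS k).sub (hS (k + 1)))), ← tsum_mul_left]
    simp only [mul_zero, pow_zero, sub_self, zero_add]
    refine tsum_congr fun j ↦ ?_
    rw [hrec j]
    ring
  linarith

lemma qWeightMomentSum_eq_mul_prod (k : ℕ) :
    qWeightMomentSum q k = qWeightMomentSum q 0 * ∏ i ∈ Finset.range k, (1 - q ^ (2 * i + 1)) := by
  induction k with
  | zero => simp
  | succ n ih => rw [qWeightMomentSum_succ hq hq1, ih, Finset.prod_range_succ]; ring

lemma qWeightMomentSum_zero_pos : 0 < qWeightMomentSum q 0 := by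
  have hq' : |q| < 1 := (abs_of_pos hq).trans_lt hq1
  refine (summable_pow_mul_qWeight hq hq1 0).tsum_pos
    (fun j ↦ mul_nonneg (pow_nonneg hq.le _) (qWeight_pos hq' (abs_pow_le_one hq hq1 j)).le) 0 ?_
  simpa using qWeight_pos hq' (abs_pow_le_one hq hq1 0)

end MomentSum

section Functional

lemma qHermiteIFunctional_of_odd {f : ℝ → ℝ} (hf : Function.Odd f) (q : ℝ) :
    qHermiteIFunctional q f = 0 := by
  simp [qHermiteIFunctional, hf.eq]

lemma jacksonSum_pow_two_mul (q : ℝ) (m : ℕ) :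
    ∑' j : ℕ, ((q ^ j) ^ (2 * m) + (-(q ^ j)) ^ (2 * m)) * qWeight q (q ^ j) * (q ^ j - q ^ (j + 1))
      = 2 * (1 - q) * qWeightMomentSum q m := by
  rw [qWeightMomentSum, ← tsum_mul_left]
  refine tsum_congr fun j ↦ ?_
  rw [Even.neg_pow (even_two_mul m)]
  ring

lemma jacksonSum_qWeight (q : ℝ) :
    ∑' j : ℕ, (qWeight q (q ^ j) + qWeight q (-(q ^ j))) * (q ^ j - q ^ (j + 1))
      = 2 * (1 - q) * qWeightMomentSum q 0 := by
  rw [← jacksonSum_pow_two_mul q 0]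
  refine tsum_congr fun j ↦ ?_
  rw [qWeight_neg]
  ring

lemma qHermiteIFunctional_pow_two_mul {q : ℝ} (hq : q ≠ 1) (m : ℕ) :
    qHermiteIFunctional q (fun x ↦ x ^ (2 * m)) = qWeightMomentSum q m / qWeightMomentSum q 0 := by
  simp only [qHermiteIFunctional]
  rw [jacksonSum_pow_two_mul, jacksonSum_qWeight]
  exact mul_div_mul_left _ _ (mul_ne_zero two_ne_zero (sub_ne_zero.2 hq.symm))

end Functional

theorem discqHermiteI_moments (q : ℝ) (hq : 0 < q) (hq1 : q < 1) (m : ℕ) :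
    qHermiteIFunctional q (fun x => x ^ (2 * m))
        = ∏ i ∈ Finset.range m, (1 - q ^ (2 * i + 1)) ∧
    qHermiteIFunctional q (fun x => x ^ (2 * m + 1)) = 0 := by
  refine ⟨?_, qHermiteIFunctional_of_odd (fun x ↦ Odd.neg_pow ⟨m, rfl⟩ x) q⟩
  rw [qHermiteIFunctional_pow_two_mul hq1.ne, qWeightMomentSum_eq_mul_prod hq hq1,
    mul_div_cancel_left₀ _ (qWeightMomentSum_zero_pos hq hq1).ne']
end

section
/- Define q-Euler-type moments by the functional Φ on polynomials in s with Φ(H_{2n}(1,s,q)) = δ_{n,0}. Then Φ(H_{2n+1}(1,s,q)) = (−1)^n T_{2n+1}(q), where the q-tangent numbers are defined by (e_q(z) − e_q(−z))/(e_q(z) + e_q(−z)) = Σ_{n≥0} (−1)^n T_{2n+1}(q) z^{2n+1}/[2n+1]_q!. -/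
open Polynomial PowerSeries

/-- `H n (1, s, q)` as a polynomial in the variable `s`. -/
noncomputable def qHermiteAtOne (q : ℝ) (n : ℕ) : Polynomial ℝ :=
  ∑ k ∈ Finset.range (n / 2 + 1),
    Polynomial.C ((-1 : ℝ) ^ k * q ^ (k ^ 2) * qbinom q n (2 * k) * qdf q k) *
      Polynomial.X ^ k

/-- The formal q-exponential `e_q(z) = ∑ z^n/[n]_q!`. -/
noncomputable def qExp (q : ℝ) : PowerSeries ℝ := PowerSeries.mk fun n => (qfac q n)⁻¹

/-- `e_q(-z)`. -/
noncomputable def qExpNeg (q : ℝ) : PowerSeries ℝ :=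
  PowerSeries.mk fun n => (-1 : ℝ) ^ n * (qfac q n)⁻¹

/-- The formal q-tangent series `∑ (-1)^n T_{2n+1}(q) z^(2n+1)/[2n+1]_q!`
built from a sequence `T` with `T n = T_{2n+1}(q)`. -/
noncomputable def qTanSeries (q : ℝ) (T : ℕ → ℝ) : PowerSeries ℝ :=
  PowerSeries.mk fun m =>
    if m % 2 = 1 then (-1 : ℝ) ^ (m / 2) * T (m / 2) * (qfac q m)⁻¹ else 0

lemma qnat_pos {q : ℝ} (hq : 0 < q) (hq1 : q < 1) {n : ℕ} (hn : n ≠ 0) : 0 < qnat q n :=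
  div_pos (sub_pos.2 (pow_lt_one₀ hq.le hq1 hn)) (sub_pos.2 hq1)

lemma qfac_pos {q : ℝ} (hq : 0 < q) (hq1 : q < 1) (n : ℕ) : 0 < qfac q n :=
  Finset.prod_pos fun j _ => qnat_pos hq hq1 j.succ_ne_zero

lemma inv_qfac_mul_qbinom {q : ℝ} (hfac : ∀ m, qfac q m ≠ 0) (n k : ℕ) :
    (qfac q n)⁻¹ * qbinom q n k = (qfac q k)⁻¹ * (qfac q (n - k))⁻¹ := by
  rw [qbinom, mul_div, inv_mul_cancel₀ (hfac n), one_div, mul_inv]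

lemma Finset.sum_range_succ_ite_even {M : Type*} [AddCommMonoid M] (n : ℕ) (g : ℕ → M) :
    ∑ j ∈ range (n + 1), (if Even j then g j else 0) = ∑ k ∈ range (n / 2 + 1), g (2 * k) := by
  rw [← Finset.sum_filter]
  refine Finset.sum_nbij' (· / 2) (2 * ·) ?_ ?_ ?_ ?_ ?_ <;> intro a ha <;>
    simp only [mem_filter, mem_range, Nat.even_iff] at ha ⊢
  any_goals omega
  rw [Nat.two_mul_div_two_of_even (Nat.even_iff.2 ha.2)]

theorem PowerSeries.coeff_add_rescale_neg_one {A : Type*} [CommRing A] (f : PowerSeries A)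
    (m : ℕ) : coeff m (f + rescale (-1) f) = if Even m then 2 * coeff m f else 0 := by
  rcases Nat.even_or_odd m with hm | hm
  · rw [if_pos hm, map_add, coeff_rescale, hm.neg_one_pow]
    ring
  · rw [if_neg (Nat.not_even_iff_odd.2 hm), map_add, coeff_rescale, hm.neg_one_pow]
    ring

theorem PowerSeries.coeff_sub_rescale_neg_one {A : Type*} [CommRing A] (f : PowerSeries A)
    (m : ℕ) : coeff m (f - rescale (-1) f) = if Even m then 0 else 2 * coeff m f := by
  rcases Nat.even_or_odd m with hm | hm
  · rw [if_pos hm, map_sub, coeff_rescale, hm.neg_one_pow]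
    ring
  · rw [if_neg (Nat.not_even_iff_odd.2 hm), map_sub, coeff_rescale, hm.neg_one_pow]
    ring

section Coeffwise

variable {R A : Type*} [CommSemiring R] [Semiring A] [Algebra R A]

noncomputable def PowerSeries.mapCoeffs (Φ : A →ₗ[R] R) (f : PowerSeries A) : PowerSeries R :=
  PowerSeries.mk fun n => Φ (PowerSeries.coeff n f)

theorem PowerSeries.mapCoeffs_map_algebraMap_mul (Φ : A →ₗ[R] R) (a : PowerSeries R)
    (f : PowerSeries A) :
    (a.map (algebraMap R A) * f).mapCoeffs Φ = a * f.mapCoeffs Φ := by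
  ext n : 1
  simp only [mapCoeffs, coeff_mk, coeff_mul, map_sum, coeff_map, ← Algebra.smul_def, map_smul,
    smul_eq_mul]

end Coeffwise

noncomputable def qHermiteEGF (q : ℝ) : PowerSeries ℝ[X] :=
  PowerSeries.mk fun n => Polynomial.C (qfac q n)⁻¹ * qHermiteAtOne q n

/-- `G(s,z) = ∑_k (-s)^k q^(k²) [2k-1]_q!! z^(2k)/[2k]_q!`, indexed by the exponent `m = 2k`
of `z`. -/
noncomputable def qHermiteEvenFactor (q : ℝ) : PowerSeries ℝ[X] :=
  PowerSeries.mk fun m => if Even m then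
    Polynomial.C ((-1) ^ (m / 2) * q ^ ((m / 2) ^ 2) * qdf q (m / 2) * (qfac q m)⁻¹) *
      Polynomial.X ^ (m / 2) else 0

section GeneratingFunction

variable {q : ℝ}

theorem qHermiteEGF_eq_map_qExp_mul (hfac : ∀ m, qfac q m ≠ 0) :
    qHermiteEGF q = (qExp q).map Polynomial.C * qHermiteEvenFactor q := by
  ext n : 1
  rw [PowerSeries.coeff_mul, ← Finset.Nat.sum_antidiagonal_swap,
    Finset.Nat.sum_antidiagonal_eq_sum_range_succ_mk]
  simp only [Prod.swap_prod_mk, qHermiteEGF, qHermiteEvenFactor, qExp, PowerSeries.coeff_mk,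
    PowerSeries.coeff_map, qHermiteAtOne, mul_ite, mul_zero, Finset.sum_range_succ_ite_even,
    Finset.mul_sum]
  refine Finset.sum_congr rfl fun k _ => ?_
  rw [Nat.mul_div_cancel_left k two_pos, ← mul_assoc, ← mul_assoc, ← map_mul, ← map_mul]
  congr 2
  linear_combination (-1) ^ k * q ^ k ^ 2 * qdf q k * inv_qfac_mul_qbinom hfac n (2 * k)

theorem rescale_neg_one_qHermiteEvenFactor :
    rescale (-1) (qHermiteEvenFactor q) = qHermiteEvenFactor q := by
  ext m : 1
  rw [coeff_rescale, qHermiteEvenFactor, PowerSeries.coeff_mk]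
  split_ifs with hm
  · rw [hm.neg_one_pow, one_mul]
  · rw [mul_zero]

theorem rescale_neg_one_qExp : rescale (-1) (qExp q) = qExpNeg q := by
  rw [qExp, qExpNeg, rescale_mk]

theorem qHermiteEGF_sub_rescale_eq (hfac : ∀ m, qfac q m ≠ 0) {T : ℕ → ℝ}
    (hT : qExp q - qExpNeg q = (qExp q + qExpNeg q) * qTanSeries q T) :
    qHermiteEGF q - rescale (-1) (qHermiteEGF q) =
      (qTanSeries q T).map Polynomial.C * (qHermiteEGF q + rescale (-1) (qHermiteEGF q)) := by
  have hneg : rescale (-1) ((qExp q).map Polynomial.C) = (qExpNeg q).map Polynomial.C := by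
    rw [← rescale_neg_one_qExp, ← rescale_map, map_neg, map_one]
  have hT' := congrArg (PowerSeries.map Polynomial.C) hT
  simp only [map_sub, map_add, map_mul] at hT'
  rw [qHermiteEGF_eq_map_qExp_mul hfac, map_mul, hneg, rescale_neg_one_qHermiteEvenFactor]
  linear_combination qHermiteEvenFactor q * hT'

theorem mapCoeffs_qHermiteEGF_add_rescale {Φ : ℝ[X] →ₗ[ℝ] ℝ}
    (hΦ : ∀ n : ℕ, Φ (qHermiteAtOne q (2 * n)) = if n = 0 then 1 else 0) :
    (qHermiteEGF q + rescale (-1) (qHermiteEGF q)).mapCoeffs Φ = 2 := by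
  ext m : 1
  rw [PowerSeries.mapCoeffs, PowerSeries.coeff_mk, PowerSeries.coeff_add_rescale_neg_one,
    ← map_ofNat PowerSeries.C, PowerSeries.coeff_C]
  rcases Nat.even_or_odd' m with ⟨k, rfl | rfl⟩
  · rw [if_pos (even_two_mul k), qHermiteEGF, PowerSeries.coeff_mk, ← mul_assoc,
      ← map_ofNat Polynomial.C, ← map_mul, Polynomial.C_mul', map_smul, hΦ, smul_eq_mul]
    rcases eq_or_ne k 0 with rfl | hk
    · simp [qfac]
    · simp [hk]
  · simp

theorem coeff_mapCoeffs_qHermiteEGF_sub_rescale (Φ : ℝ[X] →ₗ[ℝ] ℝ) (n : ℕ) :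
    PowerSeries.coeff (2 * n + 1) ((qHermiteEGF q - rescale (-1) (qHermiteEGF q)).mapCoeffs Φ) =
      2 * (qfac q (2 * n + 1))⁻¹ * Φ (qHermiteAtOne q (2 * n + 1)) := by
  rw [PowerSeries.mapCoeffs, PowerSeries.coeff_mk, PowerSeries.coeff_sub_rescale_neg_one,
    if_neg (Nat.not_even_two_mul_add_one n), qHermiteEGF, PowerSeries.coeff_mk, ← mul_assoc,
    ← map_ofNat Polynomial.C, ← map_mul, Polynomial.C_mul', map_smul, smul_eq_mul]

end GeneratingFunction

theorem coeff_qTanSeries_odd (q : ℝ) (T : ℕ → ℝ) (n : ℕ) :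
    PowerSeries.coeff (2 * n + 1) (qTanSeries q T) = (-1) ^ n * T n * (qfac q (2 * n + 1))⁻¹ := by
  rw [qTanSeries, PowerSeries.coeff_mk, if_pos (by omega), show (2 * n + 1) / 2 = n by omega]

theorem qTangent_from_functional (q : ℝ) (hq : 0 < q) (hq1 : q < 1)
    (Φ : Polynomial ℝ →ₗ[ℝ] ℝ)
    (hΦ : ∀ n : ℕ, Φ (qHermiteAtOne q (2 * n)) = if n = 0 then 1 else 0)
    (T : ℕ → ℝ)
    (hT : qExp q - qExpNeg q = (qExp q + qExpNeg q) * qTanSeries q T)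
    (n : ℕ) :
    Φ (qHermiteAtOne q (2 * n + 1)) = (-1 : ℝ) ^ n * T n := by
  have hfac : ∀ m, qfac q m ≠ 0 := fun m => (qfac_pos hq hq1 m).ne'
  have h := congrArg (fun f => PowerSeries.coeff (2 * n + 1) (f.mapCoeffs Φ))
    (qHermiteEGF_sub_rescale_eq hfac hT)
  simp only [← Polynomial.algebraMap_eq, PowerSeries.mapCoeffs_map_algebraMap_mul,
    mapCoeffs_qHermiteEGF_add_rescale hΦ, coeff_mapCoeffs_qHermiteEGF_sub_rescale] at h
  rw [← map_ofNat PowerSeries.C, PowerSeries.coeff_mul_C, coeff_qTanSeries_odd] at h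
  have := hfac (2 * n + 1)
  field_simp at h
  exact h
end
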